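/- arXiv:2510.26164 — 2 statements merged into one kernel-verified Lean document; each statement's English description precedes it below -/
import Mathlib

section
/- There is a unique F-linear map d : A_k → A_k such that d(T_i) = ξ_i − ξ_{i+1} for all 1 ≤ i ≤ k−1, d(ξ_j) = 0 for all 1 ≤ j ≤ k, and d satisfies the graded Leibniz rule d(ab) = d(a)b + (−1)^{deg a} a·d(b) for homogeneous a. This map is homogeneous of degree +1 and satisfies d∘d = 0; thus R_k := (A_k, d) is a differential graded algebra. -/
noncomputable section

/-- Generators of the algebra `A_k`: `T i` for `i : Fin (k-1)` (corresponding to the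
paper's `T_{i+1}`) and `X j` for `j : Fin k` (corresponding to the paper's `ξ_{j+1}`). -/
inductive Gen (k : ℕ) : Type
  | T : Fin (k - 1) → Gen k
  | X : Fin k → Gen k

/-- The index `i`, viewed in `Fin k` (paper index `i` for a crossing `T_i`). -/
def loIdx {k : ℕ} (i : Fin (k - 1)) : Fin k :=
  ⟨i.val, by have := i.isLt; omega⟩

/-- The index `i+1`, viewed in `Fin k` (paper index `i+1` for a crossing `T_i`). -/
def hiIdx {k : ℕ} (i : Fin (k - 1)) : Fin k :=
  ⟨i.val + 1, by have := i.isLt; omega⟩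

def gT (F : Type) [Field F] (k : ℕ) (i : Fin (k - 1)) : FreeAlgebra F (Gen k) :=
  FreeAlgebra.ι F (Gen.T i)

def gX (F : Type) [Field F] (k : ℕ) (j : Fin k) : FreeAlgebra F (Gen k) :=
  FreeAlgebra.ι F (Gen.X j)

/-- The defining relations of the algebra `A_k` (with Hecke parameter `h`). -/
inductive ARel (F : Type) [Field F] (k : ℕ) (h : F) :
    FreeAlgebra F (Gen k) → FreeAlgebra F (Gen k) → Prop
  | Tsq (i : Fin (k - 1)) :
      ARel F k h (gT F k i * gT F k i) (1 + h • gT F k i)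
  | braid (i j : Fin (k - 1)) (hij : (j : ℕ) = (i : ℕ) + 1) :
      ARel F k h (gT F k i * gT F k j * gT F k i) (gT F k j * gT F k i * gT F k j)
  | Tcomm (i j : Fin (k - 1)) (hij : (i : ℕ) + 1 < (j : ℕ)) :
      ARel F k h (gT F k i * gT F k j) (gT F k j * gT F k i)
  | Xsq (j : Fin k) : ARel F k h (gX F k j * gX F k j) 0
  | Xanti (j j' : Fin k) (hjj : j ≠ j') :
      ARel F k h (gX F k j * gX F k j') (-(gX F k j' * gX F k j))
  | XTlo (i : Fin (k - 1)) :
      ARel F k h (gX F k (loIdx i) * gT F k i) (gT F k i * gX F k (hiIdx i))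
  | XThi (i : Fin (k - 1)) :
      ARel F k h (gX F k (hiIdx i) * gT F k i)
        (gT F k i * gX F k (loIdx i) - h • (gX F k (loIdx i) - gX F k (hiIdx i)))
  | XTcomm (i : Fin (k - 1)) (j : Fin k) (h1 : j ≠ loIdx i) (h2 : j ≠ hiIdx i) :
      ARel F k h (gX F k j * gT F k i) (gT F k i * gX F k j)

/-- The algebra `A_k = H_k ⊗̃ Λ_k`, presented by generators and relations. -/
abbrev Ak (F : Type) [Field F] (k : ℕ) (h : F) : Type := RingQuot (ARel F k h)

/-- The generator `T_{i+1}` of `A_k`. -/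
def TT (F : Type) [Field F] (k : ℕ) (h : F) (i : Fin (k - 1)) : Ak F k h :=
  RingQuot.mkAlgHom F (ARel F k h) (gT F k i)

/-- The generator `ξ_{j+1}` of `A_k`. -/
def XX (F : Type) [Field F] (k : ℕ) (h : F) (j : Fin k) : Ak F k h :=
  RingQuot.mkAlgHom F (ARel F k h) (gX F k j)

/-- Degrees of the generators: `deg T_i = 0`, `deg ξ_j = 1`. -/
def gdeg {k : ℕ} : Gen k → ℕ
  | .T _ => 0
  | .X _ => 1

/-- The degree-`n` graded component of `A_k`: the span of the images of the monomials
in the generators of total degree `n`. -/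
def degComp (F : Type) [Field F] (k : ℕ) (h : F) (n : ℕ) : Submodule F (Ak F k h) :=
  Submodule.span F
    { x : Ak F k h | ∃ l : List (Gen k), (l.map gdeg).sum = n ∧
        x = (l.map fun g => RingQuot.mkAlgHom F (ARel F k h) (FreeAlgebra.ι F g)).prod }

/-- `d` is a differential on `A_k`: it takes the prescribed values on the generators and
satisfies the graded Leibniz rule with respect to homogeneous elements. -/
def IsDiff (F : Type) [Field F] (k : ℕ) (h : F) (d : Ak F k h →ₗ[F] Ak F k h) : Prop :=
  (∀ i : Fin (k - 1), d (TT F k h i) = XX F k h (loIdx i) - XX F k h (hiIdx i)) ∧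
  (∀ j : Fin k, d (XX F k h j) = 0) ∧
  (∀ n : ℕ, ∀ a ∈ degComp F k h n, ∀ b : Ak F k h,
    d (a * b) = d a * b + ((-1 : F) ^ n) • (a * d b))
namespace AkAux

variable {F : Type} [Field F] {k : ℕ} {h : F}

local notation "mk" => RingQuot.mkAlgHom F (ARel F k h)

/-- The element `ξ_i − ξ_{i+1}`. -/
def EE (F : Type) [Field F] (k : ℕ) (h : F) (i : Fin (k - 1)) : Ak F k h :=
  XX F k h (loIdx i) - XX F k h (hiIdx i)

lemma mk_gT (i : Fin (k - 1)) : mk (gT F k i) = TT F k h i := rfl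
lemma mk_gX (j : Fin k) : mk (gX F k j) = XX F k h j := rfl

lemma rel {x y : FreeAlgebra F (Gen k)} (r : ARel F k h x y) : mk x = mk y :=
  RingQuot.mkAlgHom_rel F r

lemma Tsq (i : Fin (k - 1)) : TT F k h i * TT F k h i = 1 + h • TT F k h i := by
  have := rel (ARel.Tsq (h := h) i)
  simpa [map_mul, map_add, map_one, map_smul, mk_gT] using this

lemma braid (i j : Fin (k - 1)) (hij : (j : ℕ) = (i : ℕ) + 1) :
    TT F k h i * TT F k h j * TT F k h i = TT F k h j * TT F k h i * TT F k h j := by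
  have := rel (ARel.braid (h := h) i j hij)
  simpa [map_mul, mk_gT] using this

lemma Tcomm (i j : Fin (k - 1)) (hij : (i : ℕ) + 1 < (j : ℕ)) :
    TT F k h i * TT F k h j = TT F k h j * TT F k h i := by
  have := rel (ARel.Tcomm (h := h) i j hij)
  simpa [map_mul, mk_gT] using this

lemma Xsq (j : Fin k) : XX F k h j * XX F k h j = 0 := by
  have := rel (ARel.Xsq (h := h) j)
  simpa [map_mul, mk_gX] using this

lemma Xanti (j j' : Fin k) (hjj : j ≠ j') :
    XX F k h j * XX F k h j' = -(XX F k h j' * XX F k h j) := by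
  have := rel (ARel.Xanti (h := h) j j' hjj)
  simpa [map_mul, map_neg, mk_gX] using this

lemma XTlo (i : Fin (k - 1)) :
    XX F k h (loIdx i) * TT F k h i = TT F k h i * XX F k h (hiIdx i) := by
  have := rel (ARel.XTlo (h := h) i)
  simpa [map_mul, mk_gT, mk_gX] using this

lemma XThi (i : Fin (k - 1)) :
    XX F k h (hiIdx i) * TT F k h i =
      TT F k h i * XX F k h (loIdx i) - h • (XX F k h (loIdx i) - XX F k h (hiIdx i)) := by
  have := rel (ARel.XThi (h := h) i)
  simpa [map_mul, map_sub, map_smul, mk_gT, mk_gX] using this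

lemma XTcomm (i : Fin (k - 1)) (j : Fin k) (h1 : j ≠ loIdx i) (h2 : j ≠ hiIdx i) :
    XX F k h j * TT F k h i = TT F k h i * XX F k h j := by
  have := rel (ARel.XTcomm (h := h) i j h1 h2)
  simpa [map_mul, mk_gT, mk_gX] using this


-- Derived computational identities

lemma lo_ne_hi (i : Fin (k - 1)) : loIdx (k := k) i ≠ hiIdx i :=
  Fin.ne_of_val_ne (by simp [loIdx, hiIdx])

/-- `e_i T_i + T_i e_i = h e_i`. -/
lemma ETsum (i : Fin (k - 1)) :
    EE F k h i * TT F k h i + TT F k h i * EE F k h i = h • EE F k h i := by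
  unfold EE
  rw [sub_mul, XTlo, XThi, mul_sub]
  abel

lemma ET (i : Fin (k - 1)) :
    EE F k h i * TT F k h i = h • EE F k h i - TT F k h i * EE F k h i := by
  rw [eq_sub_iff_add_eq]
  exact ETsum i

/-- Braid compatibility of the derivation values. -/
lemma braidD (i j : Fin (k - 1)) (hij : (j : ℕ) = (i : ℕ) + 1) :
    TT F k h i * TT F k h j * EE F k h i + TT F k h i * EE F k h j * TT F k h i +
      EE F k h i * TT F k h j * TT F k h i =
    TT F k h j * TT F k h i * EE F k h j + TT F k h j * EE F k h i * TT F k h j +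
      EE F k h j * TT F k h i * TT F k h j := by
  set T := TT F k h i with hT
  set U := TT F k h j with hU
  set e := EE F k h i with he
  set f := EE F k h j with hf
  set a := XX F k h (loIdx i) with ha
  set b := XX F k h (hiIdx i) with hb
  set c := XX F k h (hiIdx j) with hc
  have hlo : loIdx j = hiIdx i := Fin.ext (by simp [loIdx, hiIdx, hij])
  have hEj : f = b - c := by rw [hf, EE, hlo]
  have hEi : e = a - b := rfl
  have haU : a * U = U * a :=
    XTcomm j (loIdx i) (Fin.ne_of_val_ne (by simp [loIdx, hiIdx]; omega))
      (Fin.ne_of_val_ne (by simp [loIdx, hiIdx]; omega))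
  have hcT : c * T = T * c :=
    XTcomm i (hiIdx j) (Fin.ne_of_val_ne (by simp [loIdx, hiIdx]; omega))
      (Fin.ne_of_val_ne (by simp [loIdx, hiIdx]; omega))
  have haT : a * T = T * b := XTlo i
  have hbT : b * T = T * a - h • (a - b) := XThi i
  have hbU : b * U = U * c := by have := XTlo (F := F) (h := h) j; rwa [hlo] at this
  have hcU : c * U = U * b - h • (b - c) := by
    have := XThi (F := F) (h := h) j; rwa [hlo] at this
  have m1 : e * U = U * (a - c) := by
    rw [hEi, sub_mul, haU, hbU, ← mul_sub]
  have m2 : (a - c) * T = T * f := by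
    rw [hEj, sub_mul, haT, hcT, ← mul_sub]
  have m3 : f * T = T * (a - c) - h • e := by
    rw [hEj, hEi, sub_mul, hbT, hcT]
    rw [mul_sub]
    abel
  have m4 : (a - c) * U = U * e + h • f := by
    rw [hEi, hEj, sub_mul, haU, hcU, mul_sub]
    abel
  have hTT : T * T = 1 + h • T := Tsq i
  have hUU : U * U = 1 + h • U := Tsq j
  have L2 : T * f * T = (a - c) + h • (T * (a - c)) - h • (T * e) := by
    rw [mul_assoc, m3, mul_sub, ← mul_assoc, hTT, add_mul, one_mul,
      smul_mul_assoc, mul_smul_comm]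
  have L3 : e * U * T = U * T * f := by
    rw [m1, mul_assoc, m2, ← mul_assoc]
  have R2 : U * e * U = (a - c) + h • (U * (a - c)) := by
    rw [mul_assoc, m1, ← mul_assoc, hUU, add_mul, one_mul, smul_mul_assoc]
  have R3 : f * T * U = T * U * e + h • (T * f) - h • (U * (a - c)) := by
    rw [m3, sub_mul, mul_assoc T (a - c) U, m4, mul_add, ← mul_assoc,
      mul_smul_comm, smul_mul_assoc, m1]
  have key : h • (T * (a - c)) = h • (T * e) + h • (T * f) := by
    rw [← smul_add, ← mul_add, hEi, hEj]
    congr 1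
    abel
  rw [L2, L3, R2, R3, key]
  abel
lemma EE_def (i : Fin (k - 1)) :
    EE F k h i = XX F k h (loIdx i) - XX F k h (hiIdx i) := rfl

lemma sXE_lo (i : Fin (k - 1)) :
    ((-1 : F) • XX F k h (loIdx i)) * EE F k h i = EE F k h i * XX F k h (hiIdx i) := by
  rw [smul_mul_assoc, EE_def, mul_sub, sub_mul, Xsq, Xsq]
  module

lemma sXE_hi (i : Fin (k - 1)) :
    ((-1 : F) • XX F k h (hiIdx i)) * EE F k h i = EE F k h i * XX F k h (loIdx i) := by
  rw [smul_mul_assoc, EE_def, mul_sub, sub_mul, Xsq, Xsq,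
    Xanti (hiIdx i) (loIdx i) (Ne.symm (lo_ne_hi i))]
  module

lemma sXE_comm (i : Fin (k - 1)) (j : Fin k) (h1 : j ≠ loIdx i) (h2 : j ≠ hiIdx i) :
    ((-1 : F) • XX F k h j) * EE F k h i = EE F k h i * XX F k h j := by
  rw [smul_mul_assoc, EE_def, mul_sub, sub_mul, Xanti j (loIdx i) h1, Xanti j (hiIdx i) h2]
  module

lemma sXT_lo (i : Fin (k - 1)) :
    ((-1 : F) • XX F k h (loIdx i)) * TT F k h i =
      TT F k h i * ((-1 : F) • XX F k h (hiIdx i)) := by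
  rw [smul_mul_assoc, mul_smul_comm, XTlo i]

lemma sXT_hi (i : Fin (k - 1)) :
    ((-1 : F) • XX F k h (hiIdx i)) * TT F k h i =
      TT F k h i * ((-1 : F) • XX F k h (loIdx i)) -
        h • ((-1 : F) • XX F k h (loIdx i) - (-1 : F) • XX F k h (hiIdx i)) := by
  rw [smul_mul_assoc, mul_smul_comm, XThi i]
  module

lemma sXT_comm (i : Fin (k - 1)) (j : Fin k) (h1 : j ≠ loIdx i) (h2 : j ≠ hiIdx i) :
    ((-1 : F) • XX F k h j) * TT F k h i = TT F k h i * ((-1 : F) • XX F k h j) := by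
  rw [smul_mul_assoc, mul_smul_comm, XTcomm i j h1 h2]

lemma sXsq (j : Fin k) : ((-1 : F) • XX F k h j) * ((-1 : F) • XX F k h j) = 0 := by
  rw [smul_mul_assoc, mul_smul_comm, Xsq j]
  module

lemma sXanti (j j' : Fin k) (hjj : j ≠ j') :
    ((-1 : F) • XX F k h j) * ((-1 : F) • XX F k h j') =
      -(((-1 : F) • XX F k h j') * ((-1 : F) • XX F k h j)) := by
  rw [smul_mul_assoc, mul_smul_comm, smul_mul_assoc, mul_smul_comm, Xanti j j' hjj]
  module

lemma EcommT1 {i j : Fin (k - 1)} (hij : (i : ℕ) + 1 < (j : ℕ)) :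
    EE F k h i * TT F k h j = TT F k h j * EE F k h i := by
  unfold EE
  rw [sub_mul, mul_sub,
    XTcomm j (loIdx i) (Fin.ne_of_val_ne (by simp [loIdx, hiIdx]; omega))
      (Fin.ne_of_val_ne (by simp [loIdx, hiIdx]; omega)),
    XTcomm j (hiIdx i) (Fin.ne_of_val_ne (by simp [loIdx, hiIdx]; omega))
      (Fin.ne_of_val_ne (by simp [loIdx, hiIdx]; omega))]

lemma EcommT2 {i j : Fin (k - 1)} (hij : (i : ℕ) + 1 < (j : ℕ)) :
    EE F k h j * TT F k h i = TT F k h i * EE F k h j := by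
  unfold EE
  rw [sub_mul, mul_sub,
    XTcomm i (loIdx j) (Fin.ne_of_val_ne (by simp [loIdx, hiIdx]; omega))
      (Fin.ne_of_val_ne (by simp [loIdx, hiIdx]; omega)),
    XTcomm i (hiIdx j) (Fin.ne_of_val_ne (by simp [loIdx, hiIdx]; omega))
      (Fin.ne_of_val_ne (by simp [loIdx, hiIdx]; omega))]
/-- Matrix encoding of the sign map and the derivation on generators. -/
def genMat (F : Type) [Field F] (k : ℕ) (h : F) : Gen k → Matrix (Fin 2) (Fin 2) (Ak F k h)
  | .T i => !![TT F k h i, EE F k h i; 0, TT F k h i]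
  | .X j => !![(-1 : F) • XX F k h j, 0; 0, XX F k h j]

def Phi0 (F : Type) [Field F] (k : ℕ) (h : F) :
    FreeAlgebra F (Gen k) →ₐ[F] Matrix (Fin 2) (Fin 2) (Ak F k h) :=
  FreeAlgebra.lift F (genMat F k h)

set_option maxHeartbeats 1600000 in
lemma Phi0_rel : ∀ ⦃x y : FreeAlgebra F (Gen k)⦄, ARel F k h x y →
    Phi0 F k h x = Phi0 F k h y := by
  intro x y r
  cases r with
  | Tsq i =>
      simp only [Phi0, gT, gX, map_mul, map_add, map_one, map_smul, map_sub, map_neg,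
        FreeAlgebra.lift_ι_apply, genMat, Matrix.one_fin_two]
      ext x y
      fin_cases x <;> fin_cases y <;>
        simp only [Matrix.mul_apply, Fin.sum_univ_two, Fin.isValue, Fin.zero_eta, Fin.mk_one,
          Matrix.add_apply, Matrix.sub_apply, Matrix.smul_apply, Matrix.of_apply,
          Matrix.cons_val', Matrix.cons_val_zero, Matrix.cons_val_one, Matrix.head_cons,
          Matrix.head_fin_const, Matrix.empty_val', Matrix.cons_val_fin_one,
          mul_zero, zero_mul, add_zero, zero_add, sub_self, smul_zero, sub_zero] <;>
        first
          | rfl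
          | exact Tsq i
          | (rw [add_comm]; exact ETsum i)
  | braid i j hij =>
      simp only [Phi0, gT, gX, map_mul, map_add, map_one, map_smul, map_sub, map_neg,
        FreeAlgebra.lift_ι_apply, genMat]
      ext x y
      fin_cases x <;> fin_cases y <;>
        simp only [Matrix.mul_apply, Fin.sum_univ_two, Fin.isValue, Fin.zero_eta, Fin.mk_one,
          Matrix.add_apply, Matrix.sub_apply, Matrix.smul_apply, Matrix.of_apply,
          Matrix.cons_val', Matrix.cons_val_zero, Matrix.cons_val_one, Matrix.head_cons,
          Matrix.head_fin_const, Matrix.empty_val', Matrix.cons_val_fin_one,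
          mul_zero, zero_mul, add_zero, zero_add, sub_self, smul_zero, sub_zero] <;>
        first
          | rfl
          | exact braid i j hij
          | (simp only [add_mul, ← add_assoc]; exact braidD i j hij)
  | Tcomm i j hij =>
      simp only [Phi0, gT, gX, map_mul, map_add, map_one, map_smul, map_sub, map_neg,
        FreeAlgebra.lift_ι_apply, genMat]
      ext x y
      fin_cases x <;> fin_cases y <;>
        simp only [Matrix.mul_apply, Fin.sum_univ_two, Fin.isValue, Fin.zero_eta, Fin.mk_one,
          Matrix.add_apply, Matrix.sub_apply, Matrix.smul_apply, Matrix.of_apply,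
          Matrix.cons_val', Matrix.cons_val_zero, Matrix.cons_val_one, Matrix.head_cons,
          Matrix.head_fin_const, Matrix.empty_val', Matrix.cons_val_fin_one,
          mul_zero, zero_mul, add_zero, zero_add, sub_self, smul_zero, sub_zero] <;>
        first
          | rfl
          | exact Tcomm i j hij
          | (rw [EcommT1 hij, EcommT2 hij, add_comm])
  | Xsq j =>
      simp only [Phi0, gT, gX, map_mul, map_add, map_one, map_smul, map_sub, map_neg, map_zero,
        FreeAlgebra.lift_ι_apply, genMat]
      ext x y
      fin_cases x <;> fin_cases y <;>
        simp only [Matrix.mul_apply, Fin.sum_univ_two, Fin.isValue, Fin.zero_eta, Fin.mk_one,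
          Matrix.add_apply, Matrix.sub_apply, Matrix.smul_apply, Matrix.of_apply,
          Matrix.cons_val', Matrix.cons_val_zero, Matrix.cons_val_one, Matrix.head_cons,
          Matrix.head_fin_const, Matrix.empty_val', Matrix.cons_val_fin_one, Matrix.zero_apply,
          mul_zero, zero_mul, add_zero, zero_add, sub_self, smul_zero, sub_zero] <;>
        first
          | rfl
          | exact Xsq j
          | exact sXsq j
  | Xanti j j' hjj =>
      simp only [Phi0, gT, gX, map_mul, map_add, map_one, map_smul, map_sub, map_neg,
        FreeAlgebra.lift_ι_apply, genMat]
      ext x y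
      fin_cases x <;> fin_cases y <;>
        simp only [Matrix.mul_apply, Fin.sum_univ_two, Fin.isValue, Fin.zero_eta, Fin.mk_one,
          Matrix.add_apply, Matrix.sub_apply, Matrix.smul_apply, Matrix.of_apply,
          Matrix.cons_val', Matrix.cons_val_zero, Matrix.cons_val_one, Matrix.head_cons,
          Matrix.head_fin_const, Matrix.empty_val', Matrix.cons_val_fin_one, Matrix.neg_apply,
          mul_zero, zero_mul, add_zero, zero_add, sub_self, smul_zero, sub_zero, neg_zero] <;>
        first
          | rfl
          | exact Xanti j j' hjj
          | exact sXanti j j' hjj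
  | XTlo i =>
      simp only [Phi0, gT, gX, map_mul, map_add, map_one, map_smul, map_sub, map_neg,
        FreeAlgebra.lift_ι_apply, genMat]
      ext x y
      fin_cases x <;> fin_cases y <;>
        simp only [Matrix.mul_apply, Fin.sum_univ_two, Fin.isValue, Fin.zero_eta, Fin.mk_one,
          Matrix.add_apply, Matrix.sub_apply, Matrix.smul_apply, Matrix.of_apply,
          Matrix.cons_val', Matrix.cons_val_zero, Matrix.cons_val_one, Matrix.head_cons,
          Matrix.head_fin_const, Matrix.empty_val', Matrix.cons_val_fin_one,
          mul_zero, zero_mul, add_zero, zero_add, sub_self, smul_zero, sub_zero] <;>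
        first
          | rfl
          | exact XTlo i
          | exact sXT_lo i
          | exact sXE_lo i
  | XThi i =>
      simp only [Phi0, gT, gX, map_mul, map_add, map_one, map_smul, map_sub, map_neg,
        FreeAlgebra.lift_ι_apply, genMat]
      ext x y
      fin_cases x <;> fin_cases y <;>
        simp only [Matrix.mul_apply, Fin.sum_univ_two, Fin.isValue, Fin.zero_eta, Fin.mk_one,
          Matrix.add_apply, Matrix.sub_apply, Matrix.smul_apply, Matrix.of_apply,
          Matrix.cons_val', Matrix.cons_val_zero, Matrix.cons_val_one, Matrix.head_cons,
          Matrix.head_fin_const, Matrix.empty_val', Matrix.cons_val_fin_one,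
          mul_zero, zero_mul, add_zero, zero_add, sub_self, smul_zero, sub_zero] <;>
        first
          | rfl
          | exact XThi i
          | exact sXT_hi i
          | exact sXE_hi i
          | (rw [sub_zero]; exact XThi i)
  | XTcomm i j h1 h2 =>
      simp only [Phi0, gT, gX, map_mul, map_add, map_one, map_smul, map_sub, map_neg,
        FreeAlgebra.lift_ι_apply, genMat]
      ext x y
      fin_cases x <;> fin_cases y <;>
        simp only [Matrix.mul_apply, Fin.sum_univ_two, Fin.isValue, Fin.zero_eta, Fin.mk_one,
          Matrix.add_apply, Matrix.sub_apply, Matrix.smul_apply, Matrix.of_apply,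
          Matrix.cons_val', Matrix.cons_val_zero, Matrix.cons_val_one, Matrix.head_cons,
          Matrix.head_fin_const, Matrix.empty_val', Matrix.cons_val_fin_one,
          mul_zero, zero_mul, add_zero, zero_add, sub_self, smul_zero, sub_zero] <;>
        first
          | rfl
          | exact XTcomm i j h1 h2
          | exact sXT_comm i j h1 h2
          | exact sXE_comm i j h1 h2
def Phi (F : Type) [Field F] (k : ℕ) (h : F) :
    Ak F k h →ₐ[F] Matrix (Fin 2) (Fin 2) (Ak F k h) :=
  RingQuot.liftAlgHom F ⟨Phi0 F k h, Phi0_rel⟩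

lemma Phi_mk (x : FreeAlgebra F (Gen k)) :
    Phi F k h (RingQuot.mkAlgHom F (ARel F k h) x) = Phi0 F k h x :=
  RingQuot.liftAlgHom_mkAlgHom_apply _ _ _ _

/-- Monomials in the generators. -/
def mon (F : Type) [Field F] (k : ℕ) (h : F) (l : List (Gen k)) : Ak F k h :=
  (l.map fun g => RingQuot.mkAlgHom F (ARel F k h) (FreeAlgebra.ι F g)).prod

lemma mon_nil : mon F k h [] = 1 := rfl

lemma mon_cons (g : Gen k) (l : List (Gen k)) :
    mon F k h (g :: l) = RingQuot.mkAlgHom F (ARel F k h) (FreeAlgebra.ι F g) * mon F k h l := by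
  simp [mon]

lemma mon_append (l₁ l₂ : List (Gen k)) :
    mon F k h (l₁ ++ l₂) = mon F k h l₁ * mon F k h l₂ := by
  simp [mon]

lemma mon_mem (l : List (Gen k)) : mon F k h l ∈ degComp F k h ((l.map gdeg).sum) :=
  Submodule.subset_span ⟨l, rfl, rfl⟩

lemma one_mem_deg : (1 : Ak F k h) ∈ degComp F k h 0 := mon_mem []

lemma gen_mem_deg (g : Gen k) :
    RingQuot.mkAlgHom F (ARel F k h) (FreeAlgebra.ι F g) ∈ degComp F k h (gdeg g) := by
  have := mon_mem (F := F) (h := h) [g]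
  simpa [mon_cons, mon_nil] using this

lemma TT_mem : TT F k h i ∈ degComp F k h 0 := gen_mem_deg (Gen.T i)
lemma XX_mem (j : Fin k) : XX F k h j ∈ degComp F k h 1 := gen_mem_deg (Gen.X j)
lemma EE_mem (i : Fin (k - 1)) : EE F k h i ∈ degComp F k h 1 :=
  Submodule.sub_mem _ (XX_mem _) (XX_mem _)

lemma mul_mem_degComp {m n : ℕ} {a b : Ak F k h}
    (ha : a ∈ degComp F k h m) (hb : b ∈ degComp F k h n) :
    a * b ∈ degComp F k h (m + n) := by
  induction ha using Submodule.span_induction with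
  | mem x hx =>
      obtain ⟨l₁, hl₁, rfl⟩ := hx
      induction hb using Submodule.span_induction with
      | mem y hy =>
          obtain ⟨l₂, hl₂, rfl⟩ := hy
          have : (mon F k h l₁) * mon F k h l₂ ∈ degComp F k h (m + n) := by
            rw [← mon_append]
            have := mon_mem (F := F) (h := h) (l₁ ++ l₂)
            rwa [List.map_append, List.sum_append, hl₁, hl₂] at this
          exact this
      | zero => rw [mul_zero]; exact Submodule.zero_mem _
      | add y z _ _ hy hz => rw [mul_add]; exact Submodule.add_mem _ hy hz
      | smul r y _ hy => rw [mul_smul_comm]; exact Submodule.smul_mem _ _ hy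
  | zero => rw [zero_mul]; exact Submodule.zero_mem _
  | add x y _ _ hx hy => rw [add_mul]; exact Submodule.add_mem _ hx hy
  | smul r x _ hx => rw [smul_mul_assoc]; exact Submodule.smul_mem _ _ hx

/-- Every element of `A_k` lies in the span of the monomials. -/
lemma mem_span_mon (a : Ak F k h) :
    a ∈ Submodule.span F {x : Ak F k h | ∃ l : List (Gen k), x = mon F k h l} := by
  obtain ⟨x, rfl⟩ := RingQuot.mkAlgHom_surjective F (ARel F k h) a
  induction x using FreeAlgebra.induction with
  | grade0 r =>
      rw [AlgHom.commutes, Algebra.algebraMap_eq_smul_one]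
      exact Submodule.smul_mem _ _ (Submodule.subset_span ⟨[], rfl⟩)
  | grade1 g =>
      have : RingQuot.mkAlgHom F (ARel F k h) (FreeAlgebra.ι F g) = mon F k h [g] := by
        simp [mon_cons, mon_nil]
      exact Submodule.subset_span ⟨[g], this⟩
  | add a b ha hb => rw [map_add]; exact Submodule.add_mem _ ha hb
  | mul a b ha hb =>
      rw [map_mul]
      generalize RingQuot.mkAlgHom F (ARel F k h) a = A at ha
      generalize RingQuot.mkAlgHom F (ARel F k h) b = B at hb
      induction ha using Submodule.span_induction with
      | mem x hx =>
          induction hb using Submodule.span_induction with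
          | mem y hy =>
              obtain ⟨l₁, rfl⟩ := hx
              obtain ⟨l₂, rfl⟩ := hy
              exact Submodule.subset_span ⟨l₁ ++ l₂, (mon_append l₁ l₂).symm⟩
          | zero => rw [mul_zero]; exact Submodule.zero_mem _
          | add y z _ _ hy hz => rw [mul_add]; exact Submodule.add_mem _ hy hz
          | smul r y _ hy => rw [mul_smul_comm]; exact Submodule.smul_mem _ _ hy
      | zero => rw [zero_mul]; exact Submodule.zero_mem _
      | add x y _ _ hx hy => rw [add_mul]; exact Submodule.add_mem _ hx hy
      | smul r x _ hx => rw [smul_mul_assoc]; exact Submodule.smul_mem _ _ hx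
lemma Phi_lower (a : Ak F k h) : Phi F k h a 1 0 = 0 ∧ Phi F k h a 1 1 = a := by
  obtain ⟨x, rfl⟩ := RingQuot.mkAlgHom_surjective F (ARel F k h) a
  induction x using FreeAlgebra.induction with
  | grade0 r =>
      rw [AlgHom.commutes]
      constructor <;> simp [AlgHom.commutes, Matrix.algebraMap_matrix_apply]
  | grade1 g =>
      rw [Phi_mk]
      rw [show Phi0 F k h (FreeAlgebra.ι F g) = genMat F k h g from
        FreeAlgebra.lift_ι_apply _ _]
      cases g <;> exact ⟨rfl, rfl⟩
  | add a b ha hb =>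
      rw [map_add, map_add]
      exact ⟨by rw [Matrix.add_apply, ha.1, hb.1, add_zero],
        by rw [Matrix.add_apply, ha.2, hb.2]⟩
  | mul a b ha hb =>
      rw [map_mul, map_mul]
      constructor
      · rw [Matrix.mul_apply, Fin.sum_univ_two, ha.1, zero_mul, zero_add, hb.1, mul_zero]
      · rw [Matrix.mul_apply, Fin.sum_univ_two, ha.1, zero_mul, zero_add, ha.2, hb.2]

/-- The sign map (entry `(0,0)` of `Phi`). -/
def sg (F : Type) [Field F] (k : ℕ) (h : F) (a : Ak F k h) : Ak F k h := Phi F k h a 0 0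

lemma sg_one : sg F k h 1 = 1 := by
  unfold sg; rw [map_one, Matrix.one_apply]; simp

lemma sg_mul (a b : Ak F k h) : sg F k h (a * b) = sg F k h a * sg F k h b := by
  unfold sg
  rw [map_mul, Matrix.mul_apply, Fin.sum_univ_two, (Phi_lower b).1, mul_zero, add_zero]

lemma sg_gen (g : Gen k) :
    sg F k h (RingQuot.mkAlgHom F (ARel F k h) (FreeAlgebra.ι F g)) =
      ((-1 : F) ^ gdeg g) • RingQuot.mkAlgHom F (ARel F k h) (FreeAlgebra.ι F g) := by
  unfold sg
  rw [Phi_mk]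
  cases g with
  | T i =>
      simp only [Phi0, FreeAlgebra.lift_ι_apply, genMat, gdeg, pow_zero, one_smul]
      rfl
  | X j =>
      simp only [Phi0, FreeAlgebra.lift_ι_apply, genMat, gdeg, pow_one]
      rfl

lemma sg_mon (l : List (Gen k)) :
    sg F k h (mon F k h l) = ((-1 : F) ^ (l.map gdeg).sum) • mon F k h l := by
  induction l with
  | nil => rw [mon_nil, sg_one]; simp
  | cons g t ih =>
      rw [mon_cons, sg_mul, sg_gen, ih, smul_mul_assoc, mul_smul_comm, smul_smul, ← pow_add,
        List.map_cons, List.sum_cons]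

lemma sg_degComp {n : ℕ} {a : Ak F k h} (ha : a ∈ degComp F k h n) :
    sg F k h a = ((-1 : F) ^ n) • a := by
  induction ha using Submodule.span_induction with
  | mem x hx =>
      obtain ⟨l, hl, rfl⟩ := hx
      have := sg_mon (F := F) (h := h) l
      rwa [hl] at this
  | zero => unfold sg; rw [map_zero]; simp
  | add x y _ _ hx hy =>
      unfold sg at *
      rw [map_add, Matrix.add_apply, hx, hy, smul_add]
  | smul r x _ hx =>
      unfold sg at *
      rw [map_smul, Matrix.smul_apply, hx, smul_comm]

/-- The differential, as entry `(0,1)` of `Phi`. -/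
def dd (F : Type) [Field F] (k : ℕ) (h : F) : Ak F k h →ₗ[F] Ak F k h where
  toFun a := Phi F k h a 0 1
  map_add' a b := by
    show Phi F k h (a + b) 0 1 = Phi F k h a 0 1 + Phi F k h b 0 1
    rw [map_add, Matrix.add_apply]
  map_smul' r a := by
    show Phi F k h (r • a) 0 1 = r • Phi F k h a 0 1
    rw [map_smul, Matrix.smul_apply]

lemma dd_T (i : Fin (k - 1)) : dd F k h (TT F k h i) = EE F k h i := by
  show Phi F k h (RingQuot.mkAlgHom F (ARel F k h) (gT F k i)) 0 1 = _
  rw [Phi_mk]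
  simp [Phi0, gT, FreeAlgebra.lift_ι_apply, genMat]

lemma dd_X (j : Fin k) : dd F k h (XX F k h j) = 0 := by
  show Phi F k h (RingQuot.mkAlgHom F (ARel F k h) (gX F k j)) 0 1 = 0
  rw [Phi_mk]
  simp [Phi0, gX, FreeAlgebra.lift_ι_apply, genMat]

lemma dd_mul (a b : Ak F k h) :
    dd F k h (a * b) = dd F k h a * b + sg F k h a * dd F k h b := by
  show Phi F k h (a * b) 0 1 = Phi F k h a 0 1 * b + Phi F k h a 0 0 * Phi F k h b 0 1
  rw [map_mul, Matrix.mul_apply, Fin.sum_univ_two, (Phi_lower b).2, add_comm]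

lemma isDiff_dd : IsDiff F k h (dd F k h) := by
  refine ⟨dd_T, dd_X, fun n a ha b => ?_⟩
  rw [dd_mul, sg_degComp ha, smul_mul_assoc]
variable {d d₁ d₂ : Ak F k h →ₗ[F] Ak F k h}

lemma diff_one (hd : IsDiff F k h d) : d 1 = 0 := by
  have := hd.2.2 0 1 one_mem_deg 1
  rw [mul_one, pow_zero, one_smul, one_mul, mul_one] at this
  exact right_eq_add.mp this

lemma diff_gen_mul (hd : IsDiff F k h d) (g : Gen k) (b : Ak F k h) :
    d (RingQuot.mkAlgHom F (ARel F k h) (FreeAlgebra.ι F g) * b) =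
      d (RingQuot.mkAlgHom F (ARel F k h) (FreeAlgebra.ι F g)) * b +
        ((-1 : F) ^ gdeg g) • (RingQuot.mkAlgHom F (ARel F k h) (FreeAlgebra.ι F g) * d b) :=
  hd.2.2 (gdeg g) _ (gen_mem_deg g) b

lemma diff_gen_eq (h₁ : IsDiff F k h d₁) (h₂ : IsDiff F k h d₂) (g : Gen k) :
    d₁ (RingQuot.mkAlgHom F (ARel F k h) (FreeAlgebra.ι F g)) =
      d₂ (RingQuot.mkAlgHom F (ARel F k h) (FreeAlgebra.ι F g)) := by
  cases g with
  | T i =>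
      have e1 := h₁.1 i
      have e2 := h₂.1 i
      rw [TT, gT] at e1 e2
      rw [e1, e2]
  | X j =>
      have e1 := h₂.2.1 j
      have e2 := h₁.2.1 j
      rw [XX, gX] at e1 e2
      rw [e1, e2]

lemma diff_mon_eq (h₁ : IsDiff F k h d₁) (h₂ : IsDiff F k h d₂) :
    ∀ l : List (Gen k), d₁ (mon F k h l) = d₂ (mon F k h l) := by
  intro l
  induction l with
  | nil => rw [mon_nil, diff_one h₁, diff_one h₂]
  | cons g t ih =>
      rw [mon_cons, diff_gen_mul h₁, diff_gen_mul h₂, ih, diff_gen_eq h₁ h₂]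

lemma diff_unique (h₁ : IsDiff F k h d₁) (h₂ : IsDiff F k h d₂) : d₁ = d₂ := by
  apply LinearMap.ext
  intro a
  refine Submodule.span_induction ?_ ?_ ?_ ?_ (mem_span_mon a)
  · rintro x ⟨l, rfl⟩
    exact diff_mon_eq h₁ h₂ l
  · rw [map_zero, map_zero]
  · intro x y _ _ hx hy
    rw [map_add, map_add, hx, hy]
  · intro r x _ hx
    rw [map_smul, map_smul, hx]

lemma diff_T (hd : IsDiff F k h d) (i : Fin (k - 1)) : d (TT F k h i) = EE F k h i := hd.1 i

lemma diff_EE (hd : IsDiff F k h d) (i : Fin (k - 1)) : d (EE F k h i) = 0 := by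
  rw [EE_def, map_sub, hd.2.1, hd.2.1, sub_zero]

lemma diff_mon_deg (hd : IsDiff F k h d) :
    ∀ l : List (Gen k), d (mon F k h l) ∈ degComp F k h ((l.map gdeg).sum + 1) := by
  intro l
  induction l with
  | nil => rw [mon_nil, diff_one hd]; exact Submodule.zero_mem _
  | cons g t ih =>
      rw [mon_cons, diff_gen_mul hd]
      simp only [List.map_cons, List.sum_cons]
      apply Submodule.add_mem
      · cases g with
        | T i =>
            have e := hd.1 i
            rw [TT, gT] at e
            rw [e]
            have := mul_mem_degComp (EE_mem (F := F) (h := h) i) (mon_mem t)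
            have heq : 1 + (t.map gdeg).sum = gdeg (Gen.T i) + (t.map gdeg).sum + 1 := by
              simp [gdeg]; omega
            rwa [heq] at this
        | X j =>
            have e := hd.2.1 j
            rw [XX, gX] at e
            rw [e, zero_mul]
            exact Submodule.zero_mem _
      · apply Submodule.smul_mem
        have := mul_mem_degComp (gen_mem_deg (F := F) (h := h) g) ih
        rwa [← Nat.add_assoc] at this

lemma diff_deg (hd : IsDiff F k h d) (n : ℕ) (a : Ak F k h) (ha : a ∈ degComp F k h n) :
    d a ∈ degComp F k h (n + 1) := by
  induction ha using Submodule.span_induction with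
  | mem x hx =>
      obtain ⟨l, hl, rfl⟩ := hx
      rw [← hl]
      exact diff_mon_deg hd l
  | zero => rw [map_zero]; exact Submodule.zero_mem _
  | add x y _ _ hx hy => rw [map_add]; exact Submodule.add_mem _ hx hy
  | smul r x _ hx => rw [map_smul]; exact Submodule.smul_mem _ _ hx

lemma diff_diff_mon (hd : IsDiff F k h d) :
    ∀ l : List (Gen k), d (d (mon F k h l)) = 0 := by
  intro l
  induction l with
  | nil => rw [mon_nil, diff_one hd, map_zero]
  | cons g t ih =>
      rw [mon_cons, diff_gen_mul hd, map_add, map_smul]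
      cases g with
      | T i =>
          have e := hd.1 i
          rw [TT, gT] at e
          rw [e, ← EE_def, hd.2.2 1 _ (EE_mem i) (mon F k h t), diff_EE hd, zero_mul, zero_add]
          rw [show RingQuot.mkAlgHom F (ARel F k h) (FreeAlgebra.ι F (Gen.T i)) = TT F k h i
            from rfl]
          rw [hd.2.2 0 _ (TT_mem (i := i)) (d (mon F k h t)), hd.1 i, ih, mul_zero, smul_zero,
            add_zero]
          simp only [gdeg, pow_one, pow_zero, one_smul]
          rw [← EE_def]
          module
      | X j =>
          have e := hd.2.1 j
          rw [XX, gX] at e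
          rw [e, zero_mul, map_zero, zero_add]
          rw [show RingQuot.mkAlgHom F (ARel F k h) (FreeAlgebra.ι F (Gen.X j)) = XX F k h j
            from rfl]
          rw [hd.2.2 1 _ (XX_mem (F := F) (h := h) j) (d (mon F k h t)), hd.2.1 j, zero_mul,
            ih, mul_zero, smul_zero, add_zero, smul_zero]

lemma diff_diff (hd : IsDiff F k h d) (a : Ak F k h) : d (d a) = 0 := by
  refine Submodule.span_induction ?_ ?_ ?_ ?_ (mem_span_mon a)
  · rintro x ⟨l, rfl⟩
    exact diff_diff_mon hd l
  · rw [map_zero, map_zero]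
  · intro x y _ _ hx hy
    rw [map_add, map_add, hx, hy, add_zero]
  · intro r x _ hx
    rw [map_smul, map_smul, hx, smul_zero]
end AkAux

/-- There is a unique `F`-linear map `d : A_k → A_k` with
`d(T_i) = ξ_i − ξ_{i+1}`, `d(ξ_j) = 0`, satisfying the graded Leibniz rule; this map is
homogeneous of degree `+1` and satisfies `d ∘ d = 0`, so `R_k := (A_k, d)` is a dga. -/
theorem stmt_1 (F : Type) [Field F] (k : ℕ) (hk : 1 ≤ k) (h : F) (hh : h ≠ 0) :
    (∃! d : Ak F k h →ₗ[F] Ak F k h, IsDiff F k h d) ∧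
    ∀ d : Ak F k h →ₗ[F] Ak F k h, IsDiff F k h d →
      (∀ n : ℕ, ∀ a ∈ degComp F k h n, d a ∈ degComp F k h (n + 1)) ∧
      ∀ a : Ak F k h, d (d a) = 0 := by
  constructor
  · exact ⟨AkAux.dd F k h, AkAux.isDiff_dd,
      fun d' hd' => AkAux.diff_unique hd' AkAux.isDiff_dd⟩
  · intro d hdiff
    exact ⟨fun n a ha => AkAux.diff_deg hdiff n a ha, AkAux.diff_diff hdiff⟩
end
end

section
/- For all k ≥ 1 and all i ∈ ℤ, d(h_{k,i}) = ξ_k · h_{k,i−1} + h_{k,i−1} · ξ_k. Consequently d(h_{k,i}) = 0 for all 1 ≤ i ≤ k. -/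
noncomputable section

/-- The inclusion of indices `Fin (m-1) → Fin ((m+1)-1)`. -/
def liftT {m : ℕ} (i : Fin (m - 1)) : Fin (m + 1 - 1) :=
  ⟨i.val, by have := i.isLt; omega⟩

/-- The inclusion of indices `Fin m → Fin (m+1)`. -/
def liftX {m : ℕ} (j : Fin m) : Fin (m + 1) :=
  ⟨j.val, by have := j.isLt; omega⟩

/-- `ι` is the tower of natural inclusions `A_m → A_{m+1}`, `T_i ↦ T_i`, `ξ_j ↦ ξ_j`. -/
def TowerCond (F : Type) [Field F] (h : F)
    (ι : ∀ m : ℕ, Ak F m h →ₐ[F] Ak F (m + 1) h) : Prop :=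
  ∀ m : ℕ, (∀ i : Fin (m - 1), ι m (TT F m h i) = TT F (m + 1) h (liftT i)) ∧
    (∀ j : Fin m, ι m (XX F m h j) = XX F (m + 1) h (liftX j))

/-- The top crossing generator `T_{k-1}` of `A_k` for `k = m+2`. -/
def topT (F : Type) [Field F] (h : F) (m : ℕ) : Ak F (m + 2) h :=
  TT F (m + 2) h ⟨m, by omega⟩

/-- Its inverse `T_{k-1}^{-1} = T_{k-1} - h·1` in `A_k` for `k = m+2`. -/
def topTinv (F : Type) [Field F] (h : F) (m : ℕ) : Ak F (m + 2) h :=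
  topT F h m - algebraMap F (Ak F (m + 2) h) h

/-- The top generator `ξ_k` of `A_k` for `k = m+1`. -/
def topX (F : Type) [Field F] (h : F) (m : ℕ) : Ak F (m + 1) h :=
  XX F (m + 1) h ⟨m, by omega⟩

/-- `H` is the family of elements `h_{k,i} ∈ A_k` (`k ≥ 1`, `i ∈ ℤ`), defined by
`h_{1,1} = ξ_1`, `h_{1,i} = 0` for `i ≠ 1`, and the recursion
`h_{k,i} = ι(h_{k−1,i}) − T_{k−1}⁻¹ ι(h_{k−1,i−1}) + ι(h_{k−1,i−1}) T_{k−1}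
− T_{k−1}⁻¹ ι(h_{k−1,i−2}) T_{k−1}`. -/
def HFamily (F : Type) [Field F] (h : F)
    (ι : ∀ m : ℕ, Ak F m h →ₐ[F] Ak F (m + 1) h)
    (H : ∀ m : ℕ, ℤ → Ak F m h) : Prop :=
  H 1 1 = XX F 1 h ⟨0, by omega⟩ ∧
  (∀ i : ℤ, i ≠ 1 → H 1 i = 0) ∧
  ∀ (m : ℕ) (i : ℤ),
    H (m + 2) i =
      ι (m + 1) (H (m + 1) i)
      - topTinv F h m * ι (m + 1) (H (m + 1) (i - 1))
      + ι (m + 1) (H (m + 1) (i - 1)) * topT F h m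
      - topTinv F h m * ι (m + 1) (H (m + 1) (i - 2)) * topT F h m


section Aux

variable {F : Type} [Field F] {h : F}

/-! ### Relations lifted to `Ak` -/

lemma AkTsq {k : ℕ} (i : Fin (k - 1)) :
    TT F k h i * TT F k h i = 1 + h • TT F k h i := by
  have := RingQuot.mkAlgHom_rel F (ARel.Tsq (F := F) (k := k) (h := h) i)
  simpa [TT, map_mul, map_add, map_one, map_smul] using this

lemma AkTcomm {k : ℕ} (i j : Fin (k - 1)) (hij : (i : ℕ) + 1 < (j : ℕ)) :
    TT F k h i * TT F k h j = TT F k h j * TT F k h i := by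
  have := RingQuot.mkAlgHom_rel F (ARel.Tcomm (F := F) (k := k) (h := h) i j hij)
  simpa [TT, map_mul] using this

lemma AkXsq {k : ℕ} (j : Fin k) : XX F k h j * XX F k h j = 0 := by
  have := RingQuot.mkAlgHom_rel F (ARel.Xsq (F := F) (k := k) (h := h) j)
  simpa [XX, map_mul] using this

lemma AkXanti {k : ℕ} (j j' : Fin k) (hjj : j ≠ j') :
    XX F k h j * XX F k h j' = -(XX F k h j' * XX F k h j) := by
  have := RingQuot.mkAlgHom_rel F (ARel.Xanti (F := F) (k := k) (h := h) j j' hjj)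
  simpa [XX, map_mul, map_neg] using this

lemma AkXTlo {k : ℕ} (i : Fin (k - 1)) :
    XX F k h (loIdx i) * TT F k h i = TT F k h i * XX F k h (hiIdx i) := by
  have := RingQuot.mkAlgHom_rel F (ARel.XTlo (F := F) (k := k) (h := h) i)
  simpa [XX, TT, map_mul] using this

lemma AkXThi {k : ℕ} (i : Fin (k - 1)) :
    XX F k h (hiIdx i) * TT F k h i
      = TT F k h i * XX F k h (loIdx i) - h • (XX F k h (loIdx i) - XX F k h (hiIdx i)) := by
  have := RingQuot.mkAlgHom_rel F (ARel.XThi (F := F) (k := k) (h := h) i)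
  simpa [XX, TT, map_mul, map_sub, map_smul] using this

lemma AkXTcomm {k : ℕ} (i : Fin (k - 1)) (j : Fin k) (h1 : j ≠ loIdx i) (h2 : j ≠ hiIdx i) :
    XX F k h j * TT F k h i = TT F k h i * XX F k h j := by
  have := RingQuot.mkAlgHom_rel F (ARel.XTcomm (F := F) (k := k) (h := h) i j h1 h2)
  simpa [XX, TT, map_mul] using this

/-! ### Monomials and the grading -/

def mon (F : Type) [Field F] (h : F) {k : ℕ} (l : List (Gen k)) : Ak F k h :=
  (l.map fun g => RingQuot.mkAlgHom F (ARel F k h) (FreeAlgebra.ι F g)).prod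

lemma mon_nil {k : ℕ} : mon F h ([] : List (Gen k)) = 1 := rfl

lemma mon_cons {k : ℕ} (g : Gen k) (l : List (Gen k)) :
    mon F h (g :: l) = RingQuot.mkAlgHom F (ARel F k h) (FreeAlgebra.ι F g) * mon F h l := by
  simp [mon]

lemma mon_append {k : ℕ} (l l' : List (Gen k)) :
    mon F h (l ++ l') = mon F h l * mon F h l' := by
  simp [mon]

lemma mon_mem {k n : ℕ} (l : List (Gen k)) (hl : (l.map gdeg).sum = n) :
    mon F h l ∈ degComp F k h n :=
  Submodule.subset_span ⟨l, hl, rfl⟩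

lemma one_mem_deg {k : ℕ} : (1 : Ak F k h) ∈ degComp F k h 0 :=
  mon_mem ([] : List (Gen k)) rfl

lemma TT_mem {k : ℕ} (i : Fin (k - 1)) : TT F k h i ∈ degComp F k h 0 := by
  have : TT F k h i = mon F h [Gen.T i] := by simp [mon, TT, gT]
  rw [this]; exact mon_mem _ rfl

lemma XX_mem {k : ℕ} (j : Fin k) : XX F k h j ∈ degComp F k h 1 := by
  have : XX F k h j = mon F h [Gen.X j] := by simp [mon, XX, gX]
  rw [this]; exact mon_mem _ rfl

lemma algebraMap_mem_deg {k : ℕ} (c : F) :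
    algebraMap F (Ak F k h) c ∈ degComp F k h 0 := by
  rw [Algebra.algebraMap_eq_smul_one]
  exact Submodule.smul_mem _ _ one_mem_deg

lemma degComp_mul {k n n' : ℕ} {a b : Ak F k h}
    (ha : a ∈ degComp F k h n) (hb : b ∈ degComp F k h n') :
    a * b ∈ degComp F k h (n + n') := by
  induction ha using Submodule.span_induction with
  | mem x hx =>
    obtain ⟨l, hl, rfl⟩ := hx
    induction hb using Submodule.span_induction with
    | mem y hy =>
      obtain ⟨l', hl', rfl⟩ := hy
      have : mon F h l * mon F h l' = mon F h (l ++ l') := (mon_append l l').symm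
      rw [show ((l.map fun g => RingQuot.mkAlgHom F (ARel F k h) (FreeAlgebra.ι F g)).prod :
          Ak F k h) = mon F h l from rfl,
        show ((l'.map fun g => RingQuot.mkAlgHom F (ARel F k h) (FreeAlgebra.ι F g)).prod :
          Ak F k h) = mon F h l' from rfl, this]
      refine mon_mem _ ?_
      rw [List.map_append, List.sum_append, hl, hl']
    | zero => simpa using Submodule.zero_mem _
    | add y z _ _ hy hz => rw [mul_add]; exact Submodule.add_mem _ hy hz
    | smul c y _ hy => rw [mul_smul_comm]; exact Submodule.smul_mem _ _ hy
  | zero => simpa using Submodule.zero_mem _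
  | add x y _ _ hx hy => rw [add_mul]; exact Submodule.add_mem _ hx hy
  | smul c x _ hx => rw [smul_mul_assoc]; exact Submodule.smul_mem _ _ hx

lemma degComp_mul' {k n n' n'' : ℕ} {a b : Ak F k h} (hn : n + n' = n'')
    (ha : a ∈ degComp F k h n) (hb : b ∈ degComp F k h n') :
    a * b ∈ degComp F k h n'' := hn ▸ degComp_mul ha hb

/-! ### Basic facts about differentials -/

lemma d_one {k : ℕ} {d : Ak F k h →ₗ[F] Ak F k h} (hd : IsDiff F k h d) : d 1 = 0 := by
  have h1 := hd.2.2 0 1 one_mem_deg 1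
  simp only [mul_one, one_mul, pow_zero, one_smul] at h1
  exact add_eq_left.mp h1.symm

lemma d_algebraMap {k : ℕ} {d : Ak F k h →ₗ[F] Ak F k h} (hd : IsDiff F k h d) (c : F) :
    d (algebraMap F (Ak F k h) c) = 0 := by
  rw [Algebra.algebraMap_eq_smul_one, map_smul, d_one hd, smul_zero]

lemma Leib0 {k : ℕ} {d : Ak F k h →ₗ[F] Ak F k h} (hd : IsDiff F k h d)
    {a : Ak F k h} (ha : a ∈ degComp F k h 0) (b : Ak F k h) :
    d (a * b) = d a * b + a * d b := by
  have := hd.2.2 0 a ha b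
  simpa [pow_zero, one_smul] using this

lemma Leib1 {k : ℕ} {d : Ak F k h →ₗ[F] Ak F k h} (hd : IsDiff F k h d)
    {a : Ak F k h} (ha : a ∈ degComp F k h 1) (b : Ak F k h) :
    d (a * b) = d a * b - a * d b := by
  have h1 := hd.2.2 1 a ha b
  rw [h1, pow_one, neg_one_smul F (a * d b), ← sub_eq_add_neg]

/-! ### Transport of the grading through algebra maps -/

def gmap {m K : ℕ} (hK : m ≤ K) : Gen m → Gen K
  | .T i => .T ⟨i.val, by have := i.isLt; omega⟩
  | .X j => .X ⟨j.val, by have := j.isLt; omega⟩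

lemma gdeg_gmap {m K : ℕ} (hK : m ≤ K) (g : Gen m) : gdeg (gmap hK g) = gdeg g := by
  cases g <;> rfl

lemma map_degComp {m K : ℕ} (hK : m ≤ K) (φ : Ak F m h →ₐ[F] Ak F K h)
    (hT : ∀ i : Fin (m - 1), φ (TT F m h i) = TT F K h ⟨i.val, by have := i.isLt; omega⟩)
    (hX : ∀ j : Fin m, φ (XX F m h j) = XX F K h ⟨j.val, by have := j.isLt; omega⟩)
    {n : ℕ} {x : Ak F m h} (hx : x ∈ degComp F m h n) :
    φ x ∈ degComp F K h n := by
  induction hx using Submodule.span_induction with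
  | mem y hy =>
    obtain ⟨l, hl, rfl⟩ := hy
    have key : ∀ l : List (Gen m), φ (mon F h l) = mon F h (l.map (gmap hK)) := by
      intro l
      induction l with
      | nil => simp [mon]
      | cons g t ih =>
        rw [mon_cons, map_mul, ih, List.map_cons, mon_cons]
        congr 1
        cases g with
        | T i => exact hT i
        | X j => exact hX j
    rw [show ((l.map fun g => RingQuot.mkAlgHom F (ARel F m h) (FreeAlgebra.ι F g)).prod :
        Ak F m h) = mon F h l from rfl, key]
    refine mon_mem _ ?_
    rw [List.map_map]
    rw [show List.map (gdeg ∘ gmap hK) l = l.map gdeg from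
      List.map_congr_left (fun g _ => gdeg_gmap hK g)]
    exact hl
  | zero => simpa using Submodule.zero_mem _
  | add a b _ _ ha hb => rw [map_add]; exact Submodule.add_mem _ ha hb
  | smul c a _ ha => rw [map_smul]; exact Submodule.smul_mem _ _ ha

end Aux

lemma ringkey {R : Type} [Ring R] (x y t v b1 b2 b3 : R)
    (e1 : x * t = t * y) (e2 : y * v = v * x) :
    (x * b1 + b1 * x) - ((x - y) * b1 + v * (x * b2 + b2 * x))
      + ((x * b2 + b2 * x) * t - b1 * (x - y))
      - (((x - y) * b2 + v * (x * b3 + b3 * x)) * t - v * b2 * (x - y))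
    = y * (b1 - v * b2 + b2 * t - v * b3 * t) + (b1 - v * b2 + b2 * t - v * b3 * t) * y := by
  have h1 : ∀ z : R, y * (v * z) = v * (x * z) := fun z => by
    rw [← mul_assoc, e2, mul_assoc]
  have h2 : t * y = x * t := e1.symm
  simp only [mul_sub, sub_mul, mul_add, add_mul, mul_assoc, h1, h2]
  noncomm_ring

lemma stabkey {F : Type} [Field F] {h : F} {R : Type} [Ring R] [Algebra F R] (A P Q Tt : R)
    (hP : P * Tt = Tt * P) (hQ : Q * Tt = Tt * Q)
    (hsq : Tt * Tt = 1 + h • Tt) :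
    A - (Tt - algebraMap F R h) * P + P * Tt - (Tt - algebraMap F R h) * Q * Tt
      = A + h • P - Q := by
  have hc : ∀ x : R, algebraMap F R h * x = h • x := fun x => (Algebra.smul_def h x).symm
  rw [sub_mul, sub_mul, sub_mul, mul_assoc Tt Q Tt, mul_assoc (algebraMap F R h) Q Tt, hQ, hP,
    ← mul_assoc Tt Tt Q, hsq, hc P, hc (Tt * Q), add_mul, one_mul, smul_mul_assoc]
  abel

lemma anti_step {F : Type} [Field F] {R : Type} [Ring R] [Algebra F R] (e G M : R) (dg s : ℕ)
    (hG : e * G = ((-1 : F) ^ dg) • (G * e)) (hM : e * M = ((-1 : F) ^ s) • (M * e)) :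
    e * (G * M) = ((-1 : F) ^ (dg + s)) • (G * M * e) := by
  rw [← mul_assoc, hG, smul_mul_assoc, mul_assoc, hM, mul_smul_comm, smul_smul, ← pow_add,
    mul_assoc]

section Tower

variable {F : Type} [Field F] {h : F}
variable {ι : ∀ m : ℕ, Ak F m h →ₐ[F] Ak F (m + 1) h}
variable {H : ∀ m : ℕ, ℤ → Ak F m h}

lemma eta_anti (hι : TowerCond F h ι) {n : ℕ} {x : Ak F (n + 1) h}
    (hx : x ∈ degComp F (n + 1) h 1) :
    XX F (n + 2) h ⟨n + 1, by omega⟩ * ι (n + 1) x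
      = -(ι (n + 1) x * XX F (n + 2) h ⟨n + 1, by omega⟩) := by
  have key : ∀ l : List (Gen (n + 1)),
      XX F (n + 2) h ⟨n + 1, by omega⟩ * ι (n + 1) (mon F h l)
        = ((-1 : F) ^ ((l.map gdeg).sum))
            • (ι (n + 1) (mon F h l) * XX F (n + 2) h ⟨n + 1, by omega⟩) := by
    intro l
    induction l with
    | nil => simp [mon_nil]
    | cons g t ih =>
      rw [mon_cons, map_mul, List.map_cons, List.sum_cons]
      refine anti_step _ _ _ (gdeg g) _ ?_ ih
      cases g with
      | T i =>
        rw [show (RingQuot.mkAlgHom F (ARel F (n + 1) h)) (FreeAlgebra.ι F (Gen.T i))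
            = TT F (n + 1) h i from rfl, (hι (n + 1)).1 i]
        rw [show gdeg (Gen.T i : Gen (n + 1)) = 0 from rfl, pow_zero, one_smul]
        refine AkXTcomm (liftT i) _ ?_ ?_
        · exact Fin.ne_of_val_ne (show n + 1 ≠ (i : ℕ) from by have := i.isLt; omega)
        · exact Fin.ne_of_val_ne (show n + 1 ≠ (i : ℕ) + 1 from by have := i.isLt; omega)
      | X j =>
        rw [show (RingQuot.mkAlgHom F (ARel F (n + 1) h)) (FreeAlgebra.ι F (Gen.X j))
            = XX F (n + 1) h j from rfl, (hι (n + 1)).2 j]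
        rw [show gdeg (Gen.X j : Gen (n + 1)) = 1 from rfl, pow_one,
          neg_one_smul F (XX F (n + 1 + 1) h (liftX j) * XX F (n + 2) h ⟨n + 1, by omega⟩)]
        refine AkXanti _ _ ?_
        exact Fin.ne_of_val_ne (show n + 1 ≠ (j : ℕ) from by have := j.isLt; omega)
  induction hx using Submodule.span_induction with
  | mem y hy =>
    obtain ⟨l, hl, rfl⟩ := hy
    have hthis := key l
    rw [hl, pow_one,
      neg_one_smul F (ι (n + 1) (mon F h l) * XX F (n + 2) h ⟨n + 1, by omega⟩)] at hthis
    exact hthis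
  | zero => rw [map_zero, mul_zero, zero_mul, neg_zero]
  | add a b _ _ ha hb => rw [map_add, mul_add, add_mul, ha, hb, neg_add]
  | smul c a _ ha => rw [map_smul, mul_smul_comm, smul_mul_assoc, ha, smul_neg]

lemma diota_comm (hι : TowerCond F h ι) (m : ℕ) (x : Ak F (m + 1) h) :
    ι (m + 2) (ι (m + 1) x) * TT F (m + 3) h ⟨m + 1, by omega⟩
      = TT F (m + 3) h ⟨m + 1, by omega⟩ * ι (m + 2) (ι (m + 1) x) := by
  obtain ⟨y, rfl⟩ := RingQuot.mkAlgHom_surjective F (ARel F (m + 1) h) x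
  induction y using FreeAlgebra.induction with
  | grade0 r =>
    simp only [AlgHom.commutes]
    exact Algebra.commutes r (TT F (m + 2 + 1) h ⟨m + 1, by omega⟩)
  | grade1 g =>
    cases g with
    | T i =>
      rw [show (RingQuot.mkAlgHom F (ARel F (m + 1) h) (FreeAlgebra.ι F (Gen.T i)))
          = TT F (m + 1) h i from rfl, (hι (m + 1)).1 i, (hι (m + 2)).1 (liftT i)]
      exact AkTcomm (liftT (liftT i)) ⟨m + 1, by omega⟩
        (show (i : ℕ) + 1 < m + 1 from by have := i.isLt; omega)
    | X j =>
      rw [show (RingQuot.mkAlgHom F (ARel F (m + 1) h) (FreeAlgebra.ι F (Gen.X j)))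
          = XX F (m + 1) h j from rfl, (hι (m + 1)).2 j, (hι (m + 2)).2 (liftX j)]
      refine AkXTcomm ⟨m + 1, by omega⟩ (liftX (liftX j)) ?_ ?_
      · exact Fin.ne_of_val_ne (show (j : ℕ) ≠ m + 1 from by have := j.isLt; omega)
      · exact Fin.ne_of_val_ne (show (j : ℕ) ≠ m + 2 from by have := j.isLt; omega)
  | mul a b ha hb =>
    rw [map_mul, map_mul, map_mul, mul_assoc, hb, ← mul_assoc, ha, mul_assoc]
  | add a b ha hb =>
    rw [map_add, map_add, map_add, add_mul, mul_add, ha, hb]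

lemma H_vanish (hH : HFamily F h ι H) : ∀ m : ℕ, ∀ i : ℤ, i ≤ 0 → H (m + 1) i = 0 := by
  intro m
  induction m with
  | zero => intro i hi; exact hH.2.1 i (by omega)
  | succ m ih =>
    intro i hi
    have hrec : H (m + 1 + 1) i
        = ι (m + 1) (H (m + 1) i)
          - topTinv F h m * ι (m + 1) (H (m + 1) (i - 1))
          + ι (m + 1) (H (m + 1) (i - 1)) * topT F h m
          - topTinv F h m * ι (m + 1) (H (m + 1) (i - 2)) * topT F h m := hH.2.2 m i
    rw [hrec, ih i hi, ih (i - 1) (by omega), ih (i - 2) (by omega)]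
    simp

lemma iota_hT (hι : TowerCond F h ι) (m : ℕ) :
    ∀ i : Fin (m + 1 - 1), (ι (m + 1)) (TT F (m + 1) h i)
      = TT F (m + 2) h ⟨i.val, by have := i.isLt; omega⟩ :=
  fun i => (hι (m + 1)).1 i

lemma iota_hX (hι : TowerCond F h ι) (m : ℕ) :
    ∀ j : Fin (m + 1), (ι (m + 1)) (XX F (m + 1) h j)
      = XX F (m + 2) h ⟨j.val, by have := j.isLt; omega⟩ :=
  fun j => (hι (m + 1)).2 j

lemma H_deg1 (hι : TowerCond F h ι) (hH : HFamily F h ι H) :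
    ∀ m : ℕ, ∀ i : ℤ, H (m + 1) i ∈ degComp F (m + 1) h 1 := by
  intro m
  induction m with
  | zero =>
    intro i
    by_cases hi : i = 1
    · rw [hi, hH.1]; exact XX_mem _
    · rw [hH.2.1 i hi]; exact Submodule.zero_mem _
  | succ m ih =>
    intro i
    have hmap : ∀ j : ℤ, ι (m + 1) (H (m + 1) j) ∈ degComp F (m + 1 + 1) h 1 := fun j =>
      map_degComp (by omega) (ι (m + 1)) (iota_hT hι m) (iota_hX hι m) (ih j)
    have h0 : topTinv F h m ∈ degComp F (m + 1 + 1) h 0 := by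
      show topT F h m - algebraMap F (Ak F (m + 2) h) h ∈ degComp F (m + 2) h 0
      exact Submodule.sub_mem _ (TT_mem _) (algebraMap_mem_deg h)
    have hT0 : topT F h m ∈ degComp F (m + 1 + 1) h 0 := TT_mem _
    have hrec : H (m + 1 + 1) i
        = ι (m + 1) (H (m + 1) i)
          - topTinv F h m * ι (m + 1) (H (m + 1) (i - 1))
          + ι (m + 1) (H (m + 1) (i - 1)) * topT F h m
          - topTinv F h m * ι (m + 1) (H (m + 1) (i - 2)) * topT F h m := hH.2.2 m i
    rw [hrec]
    refine Submodule.sub_mem _ (Submodule.add_mem _ (Submodule.sub_mem _ (hmap i) ?_) ?_) ?_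
    · exact degComp_mul' rfl h0 (hmap (i - 1))
    · exact degComp_mul' rfl (hmap (i - 1)) hT0
    · exact degComp_mul' rfl (degComp_mul' (rfl : 0 + 1 = 1) h0 (hmap (i - 2))) hT0

lemma stab (hι : TowerCond F h ι) (hH : HFamily F h ι H) :
    ∀ m : ℕ, ∀ j : ℤ, j ≤ (m : ℤ) + 1 →
      H (m + 2) j = ι (m + 1) (H (m + 1) j + h • H (m + 1) (j - 1) - H (m + 1) (j - 2)) := by
  intro m
  induction m with
  | zero =>
    intro j hj
    rw [hH.2.2 0 j, H_vanish hH 0 (j - 1) (by omega), H_vanish hH 0 (j - 2) (by omega)]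
    simp
  | succ m ih =>
    intro j hj
    have ih' : ∀ j' : ℤ, j' ≤ (m : ℤ) + 1 → H (m + 1 + 1) j'
        = ι (m + 1) (H (m + 1) j' + h • H (m + 1) (j' - 1) - H (m + 1) (j' - 2)) := ih
    have hrec : H (m + 1 + 2) j
        = ι (m + 1 + 1) (H (m + 1 + 1) j)
          - topTinv F h (m + 1) * ι (m + 1 + 1) (H (m + 1 + 1) (j - 1))
          + ι (m + 1 + 1) (H (m + 1 + 1) (j - 1)) * topT F h (m + 1)
          - topTinv F h (m + 1) * ι (m + 1 + 1) (H (m + 1 + 1) (j - 2)) * topT F h (m + 1)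
        := hH.2.2 (m + 1) j
    rw [hrec, ih' (j - 1) (by omega), ih' (j - 2) (by omega)]
    conv_rhs => rw [map_sub, map_add, map_smul]
    have hP' : ι (m + 1 + 1) (ι (m + 1)
          (H (m + 1) (j - 1) + h • H (m + 1) (j - 1 - 1) - H (m + 1) (j - 1 - 2)))
          * topT F h (m + 1)
        = topT F h (m + 1) * ι (m + 1 + 1) (ι (m + 1)
          (H (m + 1) (j - 1) + h • H (m + 1) (j - 1 - 1) - H (m + 1) (j - 1 - 2))) :=
      diota_comm hι m _
    have hQ' : ι (m + 1 + 1) (ι (m + 1)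
          (H (m + 1) (j - 2) + h • H (m + 1) (j - 2 - 1) - H (m + 1) (j - 2 - 2)))
          * topT F h (m + 1)
        = topT F h (m + 1) * ι (m + 1 + 1) (ι (m + 1)
          (H (m + 1) (j - 2) + h • H (m + 1) (j - 2 - 1) - H (m + 1) (j - 2 - 2))) :=
      diota_comm hι m _
    have hsq' : topT F h (m + 1) * topT F h (m + 1) = 1 + h • topT F h (m + 1) :=
      AkTsq ⟨m + 1, by omega⟩
    rw [show topTinv F h (m + 1)
        = topT F h (m + 1) - algebraMap F (Ak F (m + 1 + 2) h) h from rfl]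
    exact stabkey _ _ _ _ hP' hQ' hsq'

lemma AC (hι : TowerCond F h ι) (hH : HFamily F h ι H) (m : ℕ) (j : ℤ) (hj : j ≤ (m : ℤ)) :
    XX F (m + 1) h ⟨m, by omega⟩ * H (m + 1) j + H (m + 1) j * XX F (m + 1) h ⟨m, by omega⟩
      = 0 := by
  rcases le_or_gt j 0 with hj0 | hj0
  · rw [H_vanish hH m j hj0, mul_zero, zero_mul, add_zero]
  · obtain ⟨m', rfl⟩ : ∃ m', m = m' + 1 := ⟨m - 1, by omega⟩
    have hst : H (m' + 1 + 1) j
        = ι (m' + 1) (H (m' + 1) j + h • H (m' + 1) (j - 1) - H (m' + 1) (j - 2)) :=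
      stab hι hH m' j (by omega)
    rw [hst]
    have hmem : (H (m' + 1) j + h • H (m' + 1) (j - 1) - H (m' + 1) (j - 2))
        ∈ degComp F (m' + 1) h 1 := by
      refine Submodule.sub_mem _ (Submodule.add_mem _ (H_deg1 hι hH m' j) ?_)
        (H_deg1 hι hH m' (j - 2))
      exact Submodule.smul_mem _ _ (H_deg1 hι hH m' (j - 1))
    have h2 : XX F (m' + 1 + 1) h ⟨m' + 1, by omega⟩
          * ι (m' + 1) (H (m' + 1) j + h • H (m' + 1) (j - 1) - H (m' + 1) (j - 2))
        = -(ι (m' + 1) (H (m' + 1) j + h • H (m' + 1) (j - 1) - H (m' + 1) (j - 2))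
            * XX F (m' + 1 + 1) h ⟨m' + 1, by omega⟩) := eta_anti hι hmem
    rw [h2]
    exact neg_add_cancel _

end Tower

section Main

variable {F : Type} [Field F] {h : F}
variable {ι : ∀ m : ℕ, Ak F m h →ₐ[F] Ak F (m + 1) h}
variable {H : ∀ m : ℕ, ℤ → Ak F m h}

lemma main1 (hι : TowerCond F h ι) (hH : HFamily F h ι H) :
    ∀ m K : ℕ, ∀ _hK : m + 1 ≤ K, ∀ φ : Ak F (m + 1) h →ₐ[F] Ak F K h,
      (∀ i : Fin (m + 1 - 1), φ (TT F (m + 1) h i)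
        = TT F K h ⟨i.val, by have := i.isLt; omega⟩) →
      (∀ j : Fin (m + 1), φ (XX F (m + 1) h j)
        = XX F K h ⟨j.val, by have := j.isLt; omega⟩) →
      ∀ d : Ak F K h →ₗ[F] Ak F K h, IsDiff F K h d → ∀ i : ℤ,
        d (φ (H (m + 1) i)) = XX F K h ⟨m, by omega⟩ * φ (H (m + 1) (i - 1))
          + φ (H (m + 1) (i - 1)) * XX F K h ⟨m, by omega⟩ := by
  intro m
  induction m with
  | zero =>
    intro K hK φ hT hX d hd i
    have hb1 : H (0 + 1) 1 = XX F (0 + 1) h ⟨0, by omega⟩ := hH.1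
    have hb0 : ∀ j : ℤ, j ≠ 1 → H (0 + 1) j = 0 := hH.2.1
    rcases eq_or_ne i 1 with rfl | h1
    · rw [hb1, hX ⟨0, by omega⟩, hd.2.1, show (1 : ℤ) - 1 = 0 from by norm_num,
        hb0 0 (by norm_num), map_zero, mul_zero, zero_mul, add_zero]
    rcases eq_or_ne i 2 with rfl | h2
    · rw [hb0 2 (by norm_num), map_zero, map_zero, show (2 : ℤ) - 1 = 1 from by norm_num,
        hb1, hX ⟨0, by omega⟩, AkXsq, add_zero]
    · rw [hb0 i h1, hb0 (i - 1) (by omega), map_zero, map_zero, mul_zero,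
        zero_mul, add_zero]
  | succ m ih =>
    intro K hK φ hT hX d hd i
    have hT' : ∀ i : Fin (m + 1 - 1), (φ.comp (ι (m + 1))) (TT F (m + 1) h i)
        = TT F K h ⟨i.val, by have := i.isLt; omega⟩ := by
      intro i
      have e1 : (φ.comp (ι (m + 1))) (TT F (m + 1) h i)
          = φ (TT F (m + 1 + 1) h (liftT i)) := by
        rw [AlgHom.comp_apply, (hι (m + 1)).1 i]
      rw [e1]
      exact hT (liftT i)
    have hX' : ∀ j : Fin (m + 1), (φ.comp (ι (m + 1))) (XX F (m + 1) h j)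
        = XX F K h ⟨j.val, by have := j.isLt; omega⟩ := by
      intro j
      have e1 : (φ.comp (ι (m + 1))) (XX F (m + 1) h j)
          = φ (XX F (m + 1 + 1) h (liftX j)) := by
        rw [AlgHom.comp_apply, (hι (m + 1)).2 j]
      rw [e1]
      exact hX (liftX j)
    have ihd := ih K (by omega) (φ.comp (ι (m + 1))) hT' hX' d hd
    have hdB : ∀ j : ℤ, d (φ (ι (m + 1) (H (m + 1) j)))
        = XX F K h ⟨m, by omega⟩ * φ (ι (m + 1) (H (m + 1) (j - 1)))
          + φ (ι (m + 1) (H (m + 1) (j - 1))) * XX F K h ⟨m, by omega⟩ := fun j => ihd j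
    have htop : φ (topT F h m) = TT F K h ⟨m, by omega⟩ := hT ⟨m, by omega⟩
    have htopinv : φ (topTinv F h m)
        = TT F K h ⟨m, by omega⟩ - algebraMap F (Ak F K h) h := by
      rw [show topTinv F h m = topT F h m - algebraMap F (Ak F (m + 1 + 1) h) h from rfl,
        map_sub, htop, AlgHom.commutes]
    have hrecφ : ∀ j : ℤ, φ (H (m + 1 + 1) j)
        = φ (ι (m + 1) (H (m + 1) j))
          - (TT F K h ⟨m, by omega⟩ - algebraMap F (Ak F K h) h)
              * φ (ι (m + 1) (H (m + 1) (j - 1)))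
          + φ (ι (m + 1) (H (m + 1) (j - 1))) * TT F K h ⟨m, by omega⟩
          - (TT F K h ⟨m, by omega⟩ - algebraMap F (Ak F K h) h)
              * φ (ι (m + 1) (H (m + 1) (j - 2))) * TT F K h ⟨m, by omega⟩ := by
      intro j
      have hrec : H (m + 1 + 1) j
          = ι (m + 1) (H (m + 1) j)
            - topTinv F h m * ι (m + 1) (H (m + 1) (j - 1))
            + ι (m + 1) (H (m + 1) (j - 1)) * topT F h m
            - topTinv F h m * ι (m + 1) (H (m + 1) (j - 2)) * topT F h m := hH.2.2 m j
      rw [hrec]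
      simp only [map_sub, map_add, map_mul]
      rw [htop, htopinv]
    have hB1mem : ∀ j : ℤ, φ (ι (m + 1) (H (m + 1) j)) ∈ degComp F K h 1 := fun j =>
      map_degComp (by omega) (φ.comp (ι (m + 1))) hT' hX' (H_deg1 hι hH m j)
    have hVKmem : (TT F K h ⟨m, by omega⟩ - algebraMap F (Ak F K h) h)
        ∈ degComp F K h 0 :=
      Submodule.sub_mem _ (TT_mem _) (algebraMap_mem_deg h)
    have hVBmem : ∀ j : ℤ, (TT F K h ⟨m, by omega⟩ - algebraMap F (Ak F K h) h)
        * φ (ι (m + 1) (H (m + 1) j)) ∈ degComp F K h 1 := fun j =>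
      degComp_mul' rfl hVKmem (hB1mem j)
    have hdT : d (TT F K h ⟨m, by omega⟩)
        = XX F K h ⟨m, by omega⟩ - XX F K h ⟨m + 1, by omega⟩ := hd.1 ⟨m, by omega⟩
    have hdV : d (TT F K h ⟨m, by omega⟩ - algebraMap F (Ak F K h) h)
        = XX F K h ⟨m, by omega⟩ - XX F K h ⟨m + 1, by omega⟩ := by
      rw [map_sub, hdT, d_algebraMap hd, sub_zero]
    have e1 : XX F K h ⟨m, by omega⟩ * TT F K h ⟨m, by omega⟩
        = TT F K h ⟨m, by omega⟩ * XX F K h ⟨m + 1, by omega⟩ := AkXTlo ⟨m, by omega⟩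
    have e2' : XX F K h ⟨m + 1, by omega⟩ * TT F K h ⟨m, by omega⟩
        = TT F K h ⟨m, by omega⟩ * XX F K h ⟨m, by omega⟩
          - h • (XX F K h ⟨m, by omega⟩ - XX F K h ⟨m + 1, by omega⟩) := AkXThi ⟨m, by omega⟩
    have e2 : XX F K h ⟨m + 1, by omega⟩
          * (TT F K h ⟨m, by omega⟩ - algebraMap F (Ak F K h) h)
        = (TT F K h ⟨m, by omega⟩ - algebraMap F (Ak F K h) h)
          * XX F K h ⟨m, by omega⟩ := by
      have hza : ∀ x : Ak F K h, x * algebraMap F (Ak F K h) h = h • x := fun x => by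
        rw [← Algebra.commutes, ← Algebra.smul_def]
      rw [mul_sub, sub_mul, e2', hza (XX F K h ⟨m + 1, by omega⟩), ← Algebra.smul_def,
        smul_sub]
      abel
    have hdB0 : d (φ (ι (m + 1) (H (m + 1) i)))
        = XX F K h ⟨m, by omega⟩ * φ (ι (m + 1) (H (m + 1) (i - 1)))
          + φ (ι (m + 1) (H (m + 1) (i - 1))) * XX F K h ⟨m, by omega⟩ := hdB i
    have hdB1 : d (φ (ι (m + 1) (H (m + 1) (i - 1))))
        = XX F K h ⟨m, by omega⟩ * φ (ι (m + 1) (H (m + 1) (i - 2)))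
          + φ (ι (m + 1) (H (m + 1) (i - 2))) * XX F K h ⟨m, by omega⟩ := by
      have := hdB (i - 1)
      rwa [show i - 1 - 1 = i - 2 from by ring] at this
    have hdB2 : d (φ (ι (m + 1) (H (m + 1) (i - 2))))
        = XX F K h ⟨m, by omega⟩ * φ (ι (m + 1) (H (m + 1) (i - 3)))
          + φ (ι (m + 1) (H (m + 1) (i - 3))) * XX F K h ⟨m, by omega⟩ := by
      have := hdB (i - 2)
      rwa [show i - 2 - 1 = i - 3 from by ring] at this
    calc d (φ (H (m + 1 + 1) i))
        = d (φ (ι (m + 1) (H (m + 1) i))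
            - (TT F K h ⟨m, by omega⟩ - algebraMap F (Ak F K h) h)
                * φ (ι (m + 1) (H (m + 1) (i - 1)))
            + φ (ι (m + 1) (H (m + 1) (i - 1))) * TT F K h ⟨m, by omega⟩
            - (TT F K h ⟨m, by omega⟩ - algebraMap F (Ak F K h) h)
                * φ (ι (m + 1) (H (m + 1) (i - 2))) * TT F K h ⟨m, by omega⟩) := by
          rw [hrecφ i]
      _ = d (φ (ι (m + 1) (H (m + 1) i)))
            - d ((TT F K h ⟨m, by omega⟩ - algebraMap F (Ak F K h) h)
                * φ (ι (m + 1) (H (m + 1) (i - 1))))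
            + d (φ (ι (m + 1) (H (m + 1) (i - 1))) * TT F K h ⟨m, by omega⟩)
            - d ((TT F K h ⟨m, by omega⟩ - algebraMap F (Ak F K h) h)
                * φ (ι (m + 1) (H (m + 1) (i - 2))) * TT F K h ⟨m, by omega⟩) := by
          simp only [map_sub, map_add]
      _ = (XX F K h ⟨m, by omega⟩ * φ (ι (m + 1) (H (m + 1) (i - 1)))
              + φ (ι (m + 1) (H (m + 1) (i - 1))) * XX F K h ⟨m, by omega⟩)
            - ((XX F K h ⟨m, by omega⟩ - XX F K h ⟨m + 1, by omega⟩)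
                  * φ (ι (m + 1) (H (m + 1) (i - 1)))
                + (TT F K h ⟨m, by omega⟩ - algebraMap F (Ak F K h) h)
                  * (XX F K h ⟨m, by omega⟩ * φ (ι (m + 1) (H (m + 1) (i - 2)))
                    + φ (ι (m + 1) (H (m + 1) (i - 2))) * XX F K h ⟨m, by omega⟩))
            + ((XX F K h ⟨m, by omega⟩ * φ (ι (m + 1) (H (m + 1) (i - 2)))
                  + φ (ι (m + 1) (H (m + 1) (i - 2))) * XX F K h ⟨m, by omega⟩)
                  * TT F K h ⟨m, by omega⟩
                - φ (ι (m + 1) (H (m + 1) (i - 1)))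
                  * (XX F K h ⟨m, by omega⟩ - XX F K h ⟨m + 1, by omega⟩))
            - (((XX F K h ⟨m, by omega⟩ - XX F K h ⟨m + 1, by omega⟩)
                  * φ (ι (m + 1) (H (m + 1) (i - 2)))
                + (TT F K h ⟨m, by omega⟩ - algebraMap F (Ak F K h) h)
                  * (XX F K h ⟨m, by omega⟩ * φ (ι (m + 1) (H (m + 1) (i - 3)))
                    + φ (ι (m + 1) (H (m + 1) (i - 3))) * XX F K h ⟨m, by omega⟩))
                  * TT F K h ⟨m, by omega⟩
                - (TT F K h ⟨m, by omega⟩ - algebraMap F (Ak F K h) h)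
                  * φ (ι (m + 1) (H (m + 1) (i - 2)))
                  * (XX F K h ⟨m, by omega⟩ - XX F K h ⟨m + 1, by omega⟩)) := by
          rw [Leib0 hd hVKmem (φ (ι (m + 1) (H (m + 1) (i - 1)))),
            Leib1 hd (hB1mem (i - 1)) (TT F K h ⟨m, by omega⟩),
            Leib1 hd (hVBmem (i - 2)) (TT F K h ⟨m, by omega⟩),
            Leib0 hd hVKmem (φ (ι (m + 1) (H (m + 1) (i - 2)))),
            hdB0, hdB1, hdB2, hdT, hdV]
      _ = XX F K h ⟨m + 1, by omega⟩
              * (φ (ι (m + 1) (H (m + 1) (i - 1)))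
                - (TT F K h ⟨m, by omega⟩ - algebraMap F (Ak F K h) h)
                    * φ (ι (m + 1) (H (m + 1) (i - 2)))
                + φ (ι (m + 1) (H (m + 1) (i - 2))) * TT F K h ⟨m, by omega⟩
                - (TT F K h ⟨m, by omega⟩ - algebraMap F (Ak F K h) h)
                    * φ (ι (m + 1) (H (m + 1) (i - 3))) * TT F K h ⟨m, by omega⟩)
            + (φ (ι (m + 1) (H (m + 1) (i - 1)))
                - (TT F K h ⟨m, by omega⟩ - algebraMap F (Ak F K h) h)
                    * φ (ι (m + 1) (H (m + 1) (i - 2)))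
                + φ (ι (m + 1) (H (m + 1) (i - 2))) * TT F K h ⟨m, by omega⟩
                - (TT F K h ⟨m, by omega⟩ - algebraMap F (Ak F K h) h)
                    * φ (ι (m + 1) (H (m + 1) (i - 3))) * TT F K h ⟨m, by omega⟩)
              * XX F K h ⟨m + 1, by omega⟩ :=
          ringkey _ _ _ _ _ _ _ e1 e2
      _ = XX F K h ⟨m + 1, by omega⟩ * φ (H (m + 1 + 1) (i - 1))
            + φ (H (m + 1 + 1) (i - 1)) * XX F K h ⟨m + 1, by omega⟩ := by
          rw [hrecφ (i - 1), show i - 1 - 1 = i - 2 from by ring,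
            show i - 1 - 2 = i - 3 from by ring]

end Main

/-- For all `k ≥ 1` (`k = m+1`) and all `i ∈ ℤ`,
`d(h_{k,i}) = ξ_k · h_{k,i−1} + h_{k,i−1} · ξ_k`; consequently `d(h_{k,i}) = 0` for
`1 ≤ i ≤ k`. -/
theorem stmt_4 (F : Type) [Field F] (h : F) (hh : h ≠ 0)
    (ι : ∀ m : ℕ, Ak F m h →ₐ[F] Ak F (m + 1) h) (hι : TowerCond F h ι)
    (H : ∀ m : ℕ, ℤ → Ak F m h) (hH : HFamily F h ι H) :
    ∀ (m : ℕ) (d : Ak F (m + 1) h →ₗ[F] Ak F (m + 1) h), IsDiff F (m + 1) h d →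
      (∀ i : ℤ, d (H (m + 1) i) =
        topX F h m * H (m + 1) (i - 1) + H (m + 1) (i - 1) * topX F h m) ∧
      (∀ i : ℤ, 1 ≤ i → i ≤ (m : ℤ) + 1 → d (H (m + 1) i) = 0) := by
  intro m d hd
  have part1 : ∀ i : ℤ, d (H (m + 1) i)
      = topX F h m * H (m + 1) (i - 1) + H (m + 1) (i - 1) * topX F h m := by
    intro i
    exact main1 hι hH m (m + 1) (le_refl _) (AlgHom.id F (Ak F (m + 1) h))
      (fun i => rfl) (fun j => rfl) d hd i
  refine ⟨part1, fun i hi1 hi2 => ?_⟩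
  rw [part1 i]
  exact AC hι hH m (i - 1) (by omega)
end
end
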